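/- Let f : ℝ^n → ℝ be smooth (continuously differentiable) and let x₀ satisfy ∇f(x₀) ≠ 0. Define Ω = {x : f(x) ≤ f(x₀)}. Then the half-space Q = {x : ⟨∇f(x₀), x − x₀⟩ ≤ 0} is a tent of Ω at x₀: there exists a map r defined in a neighborhood of x₀ with r(x) = x + o(x − x₀) and ε > 0 such that r(x) ∈ Ω for all x ∈ Q with ‖x − x₀‖ < ε. -/

import Mathlib

/-!
Write `f (x₀ + y) = f x₀ + L y + R y` with `R y = o(‖y‖)`, and let `ρ t` be the supremum of `|R|`
on the closed ball of radius `t`; then `ρ t = o(t)`. Pick `u` with `L u = 1` and push each `x`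
along `-u` by `ρ (2‖x - x₀‖)`: this is `o(‖x - x₀‖)`, hence keeps `r x` within `2‖x - x₀‖` of `x₀`,
so the remainder at `r x` is at most the decrease `ρ (2‖x - x₀‖)` of the linear part, and
`f (r x) ≤ f x₀ + L (x - x₀) ≤ f x₀` on the half-space.
-/

open Asymptotics Filter Topology Metric

/-- Unbounded sets have `sSup = 0`, so this is meaningful only for small `t` when `g = o(‖y‖)`. -/
noncomputable def supAbsClosedBall {E : Type*} [SeminormedAddCommGroup E] (g : E → ℝ) (t : ℝ) :
    ℝ :=
  sSup ((fun y => |g y|) '' closedBall 0 t)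

section SupAbsClosedBall

variable {E : Type*} [SeminormedAddCommGroup E] {g : E → ℝ}

theorem supAbsClosedBall_nonneg (t : ℝ) : 0 ≤ supAbsClosedBall g t :=
  Real.sSup_nonneg <| by
    rintro _ ⟨y, -, rfl⟩
    exact abs_nonneg _

theorem eventually_abs_le_supAbsClosedBall (hg : g =o[𝓝 0] fun y => y) :
    ∀ᶠ t in 𝓝 0, ∀ y, ‖y‖ ≤ t → |g y| ≤ supAbsClosedBall g t := by
  obtain ⟨δ, hδ, hle⟩ := Metric.eventually_nhds_iff.mp (hg.bound one_pos)
  filter_upwards [Iio_mem_nhds hδ] with t ht y hy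
  refine le_csSup ⟨t, ?_⟩ ⟨y, by rwa [mem_closedBall_zero_iff], rfl⟩
  rintro _ ⟨z, hz, rfl⟩
  rw [mem_closedBall_zero_iff] at hz
  have := hle (show dist z 0 < δ by rw [dist_zero_right]; exact hz.trans_lt ht)
  rw [one_mul, Real.norm_eq_abs] at this
  exact this.trans hz

theorem isLittleO_supAbsClosedBall (hg : g =o[𝓝 0] fun y => y) :
    supAbsClosedBall g =o[𝓝[≥] 0] fun t => t := by
  refine isLittleO_iff.mpr fun c hc => ?_
  obtain ⟨δ, hδ, hle⟩ := Metric.eventually_nhds_iff.mp (hg.bound hc)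
  filter_upwards [self_mem_nhdsWithin, nhdsWithin_le_nhds (Iio_mem_nhds hδ)]
    with t (ht : 0 ≤ t) htδ
  rw [Real.norm_of_nonneg (supAbsClosedBall_nonneg t), Real.norm_of_nonneg ht]
  refine csSup_le ⟨_, 0, by simpa using ht, rfl⟩ ?_
  rintro _ ⟨z, hz, rfl⟩
  rw [mem_closedBall_zero_iff] at hz
  have := hle (show dist z 0 < δ by rw [dist_zero_right]; exact hz.trans_lt htδ)
  rw [Real.norm_eq_abs] at this
  exact this.trans (mul_le_mul_of_nonneg_left hz hc.le)

end SupAbsClosedBall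

theorem exists_tent_map_of_hasFDerivAt {E : Type*} [NormedAddCommGroup E] [NormedSpace ℝ E]
    {f : E → ℝ} {L : E →L[ℝ] ℝ} {x₀ : E} (hf : HasFDerivAt f L x₀) (hL : L ≠ 0) :
    ∃ r : E → E, ((fun x => r x - x) =o[𝓝 x₀] fun x => x - x₀) ∧
      ∀ᶠ x in 𝓝 x₀, L (x - x₀) ≤ 0 → f (r x) ≤ f x₀ := by
  obtain ⟨u, hu⟩ : ∃ u, L u = 1 :=
    LinearMap.surjective_of_ne_zero (f := (L : E →ₗ[ℝ] ℝ))
      (ContinuousLinearMap.coe_injective.ne hL) 1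
  set R : E → ℝ := fun y => f (x₀ + y) - f x₀ - L y
  have hR : R =o[𝓝 0] fun y => y := hasFDerivAt_iff_isLittleO_nhds_zero.mp hf
  set ρ : E → ℝ := fun x => supAbsClosedBall R (2 * ‖x - x₀‖)
  have hradius : Tendsto (fun x => 2 * ‖x - x₀‖) (𝓝 x₀) (𝓝[≥] 0) := by
    refine tendsto_nhdsWithin_iff.mpr ⟨?_, Eventually.of_forall fun x => ?_⟩
    · simpa using (tendsto_norm_sub_self x₀).const_mul 2
    · exact Set.mem_Ici.mpr (by positivity)
  have hshift : (fun x => ρ x • u) =o[𝓝 x₀] fun x => x - x₀ := by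
    have hρ : ρ =o[𝓝 x₀] fun x => x - x₀ :=
      ((isLittleO_supAbsClosedBall hR).comp_tendsto hradius).trans_isBigO
        ((isBigO_norm_left.mpr (isBigO_refl _ _)).const_mul_left 2)
    refine IsBigO.trans_isLittleO ?_ hρ
    exact isBigO_iff.mpr ⟨‖u‖, Eventually.of_forall fun x => by rw [norm_smul, mul_comm]⟩
  refine ⟨fun x => x - ρ x • u, by simpa using hshift.neg_left, ?_⟩
  have hsmall : ∀ᶠ x in 𝓝 x₀, ‖ρ x • u‖ ≤ ‖x - x₀‖ := by
    simpa using hshift.bound one_pos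
  have hbound : ∀ᶠ x in 𝓝 x₀, ∀ y, ‖y‖ ≤ 2 * ‖x - x₀‖ → |R y| ≤ ρ x :=
    (hradius.mono_right nhdsWithin_le_nhds).eventually (eventually_abs_le_supAbsClosedBall hR)
  filter_upwards [hsmall, hbound] with x hx hb hQ
  have hy : ‖x - ρ x • u - x₀‖ ≤ 2 * ‖x - x₀‖ := by
    rw [sub_right_comm]
    linarith [norm_sub_le (x - x₀) (ρ x • u)]
  have := (abs_le.mp (hb _ hy)).2
  simp only [R, add_sub_cancel, map_sub, map_smul, hu, smul_eq_mul, mul_one] at this hQ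
  linarith

theorem stmt_13_general {n : ℕ} (f : EuclideanSpace ℝ (Fin n) → ℝ)
    (x₀ : EuclideanSpace ℝ (Fin n))
    (hgrad : fderiv ℝ f x₀ ≠ 0) :
    ∃ r : EuclideanSpace ℝ (Fin n) → EuclideanSpace ℝ (Fin n),
      ((fun x => r x - x) =o[nhds x₀] fun x => x - x₀) ∧
      ∃ ε > (0 : ℝ), ∀ x, fderiv ℝ f x₀ (x - x₀) ≤ 0 → ‖x - x₀‖ < ε → f (r x) ≤ f x₀ := by
  have hf : DifferentiableAt ℝ f x₀ := by
    by_contra h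
    exact hgrad (fderiv_zero_of_not_differentiableAt h)
  obtain ⟨r, hr, hΩ⟩ := exists_tent_map_of_hasFDerivAt hf.hasFDerivAt hgrad
  obtain ⟨ε, hε, hball⟩ := Metric.eventually_nhds_iff.mp hΩ
  exact ⟨r, hr, ε, hε, fun x hQ hx => hball (by rwa [dist_eq_norm]) hQ⟩

/-- Boltyanskii's Theorem 9: if `∇f(x₀) ≠ 0`, the half-space
`Q = {x : ⟨∇f(x₀), x - x₀⟩ ≤ 0}` is a tent of `Ω = {x : f x ≤ f x₀}` at `x₀`, witnessed
by a map `r(x) = x + o(x - x₀)` sending points of `Q` near `x₀` into `Ω`. -/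
theorem stmt_13 {n : ℕ} (f : EuclideanSpace ℝ (Fin n) → ℝ)
    (hf : ContDiff ℝ 1 f) (x₀ : EuclideanSpace ℝ (Fin n))
    (hgrad : fderiv ℝ f x₀ ≠ 0) :
    ∃ r : EuclideanSpace ℝ (Fin n) → EuclideanSpace ℝ (Fin n),
      ((fun x => r x - x) =o[nhds x₀] fun x => x - x₀) ∧
      ∃ ε > (0 : ℝ), ∀ x, fderiv ℝ f x₀ (x - x₀) ≤ 0 → ‖x - x₀‖ < ε → f (r x) ≤ f x₀ :=
  stmt_13_general f x₀ hgrad
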